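/- The signed count of non-minimal shifted set-valued P-tableaux of shape λ vanishes: Σ_{T ∈ SSVT_P(λ,n) \ {T_P}} (-1)^{|T|} = 0, where T_P is the unique tableau with T_{i,j} = {i} for all cells (i,j). -/

import Mathlib

open Finset

/- Letters of the alphabet `{1' < 1 < 2' < 2 < … < n' < n}` are encoded as
natural numbers: `2*k - 1` encodes the primed letter `k'` and `2*k` encodes the
unprimed letter `k`.  The usual order on `ℕ` then matches the alphabet order. -/

/-- A strict partition: a strictly decreasing list of positive integers. -/
def IsStrictPartition (lam : List ℕ) : Prop :=
  lam.Chain' (· > ·) ∧ ∀ p ∈ lam, 0 < p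

/-- Cells of the shifted skew Young diagram of `λ/μ` (rows are 1-indexed):
`(i,j)` with `1 ≤ i ≤ ℓ(λ)` and `μ_i + i ≤ j ≤ λ_i + i - 1`. -/
def sCells (lam mu : List ℕ) : Finset (ℕ × ℕ) :=
  (Finset.range (lam.length + 1) ×ˢ
      Finset.range (lam.length + lam.foldr max 0 + 1)).filter
    (fun c => 1 ≤ c.1 ∧ c.1 ≤ lam.length ∧
      mu.getD (c.1 - 1) 0 + c.1 ≤ c.2 ∧ c.2 ≤ lam.getD (c.1 - 1) 0 + c.1 - 1)

/-- Shifted skew set-valued semistandard tableau of Q-type of shape `λ/μ`,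
with letters from `{1' < 1 < … < n' < n}` (encoded in `[1, 2n]`). -/
structure IsSSVTQ (lam mu : List ℕ) (n : ℕ) (T : ℕ × ℕ → Finset ℕ) : Prop where
  support : ∀ c, c ∉ sCells lam mu → T c = ∅
  cellNonempty : ∀ c ∈ sCells lam mu, (T c).Nonempty
  inRange : ∀ c, ∀ a ∈ T c, 1 ≤ a ∧ a ≤ 2 * n
  rowWeak : ∀ i j, (i, j) ∈ sCells lam mu → (i, j + 1) ∈ sCells lam mu →
      ∀ a ∈ T (i, j), ∀ b ∈ T (i, j + 1), a ≤ b
  colWeak : ∀ i j, (i, j) ∈ sCells lam mu → (i + 1, j) ∈ sCells lam mu →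
      ∀ a ∈ T (i, j), ∀ b ∈ T (i + 1, j), a ≤ b
  colOnce : ∀ a, a % 2 = 0 → ∀ i i' j, a ∈ T (i, j) → a ∈ T (i', j) → i = i'
  rowOnce : ∀ a, a % 2 = 1 → ∀ i j j', a ∈ T (i, j) → a ∈ T (i, j') → j = j'

/-- P-type: additionally no primed (odd-encoded) letters on the main diagonal. -/
def IsSSVTP (lam mu : List ℕ) (n : ℕ) (T : ℕ × ℕ → Finset ℕ) : Prop :=
  IsSSVTQ lam mu n T ∧ ∀ i, ∀ a ∈ T (i, i), a % 2 = 0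

/-- `|T|`: total number of letters placed in the tableau. -/
def tabSize (lam mu : List ℕ) (T : ℕ × ℕ → Finset ℕ) : ℕ :=
  ∑ c ∈ sCells lam mu, (T c).card

/-- `ω_k(T)`: number of occurrences of `k` and `k'` in `T`. -/
def tabWeight (lam mu : List ℕ) (T : ℕ × ℕ → Finset ℕ) (k : ℕ) : ℕ :=
  ∑ c ∈ sCells lam mu, ((T c).filter (fun a => (a + 1) / 2 = k)).card

/-- Total entry sum of a tableau, where the letter encoded by `a` has value
`a/2` (so `k'` counts as `k - 1/2` and `k` counts as `k`). -/
def entrySum (lam mu : List ℕ) (T : ℕ × ℕ → Finset ℕ) : ℚ :=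
  ∑ c ∈ sCells lam mu, ∑ a ∈ T c, (a : ℚ) / 2

/-- The minimal straight-shape P-tableau `T_P`, with `(T_P)_{i,j} = {i}`. -/
def TminP (lam : List ℕ) : ℕ × ℕ → Finset ℕ :=
  fun c => if c ∈ sCells lam [] then {2 * c.1} else ∅

/-- The minimal straight-shape Q-tableau `T_Q`, with `(T_Q)_{i,i} = {i'}` and
`(T_Q)_{i,j} = {i}` off the diagonal. -/
def TminQ (lam : List ℕ) : ℕ × ℕ → Finset ℕ :=
  fun c => if c ∈ sCells lam [] then
    (if c.1 = c.2 then {2 * c.1 - 1} else {2 * c.1}) else ∅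

/-- Specialization of the K-theoretic (skew) Schur P-function
`GP_{λ/μ}(x₁,…,xₙ | β) = Σ_T β^{|T|-|λ/μ|} x^{ω(T)}`. -/
noncomputable def GPspec (lam mu : List ℕ) (n : ℕ) (x : ℕ → ℚ) (β : ℚ) : ℚ :=
  ∑ᶠ T ∈ {T : ℕ × ℕ → Finset ℕ | IsSSVTP lam mu n T},
    β ^ (tabSize lam mu T - (lam.sum - mu.sum)) *
      ∏ k ∈ Finset.Icc 1 n, x k ^ tabWeight lam mu T k

/-- Specialization of the K-theoretic (skew) Schur Q-function. -/
noncomputable def GQspec (lam mu : List ℕ) (n : ℕ) (x : ℕ → ℚ) (β : ℚ) : ℚ :=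
  ∑ᶠ T ∈ {T : ℕ × ℕ → Finset ℕ | IsSSVTQ lam mu n T},
    β ^ (tabSize lam mu T - (lam.sum - mu.sum)) *
      ∏ k ∈ Finset.Icc 1 n, x k ^ tabWeight lam mu T k

/-- Schur P-polynomial: sum of `x^{ω(T)}` over shifted semistandard tableaux
(set-valued tableaux all of whose cells are singletons), P-condition. -/
noncomputable def Ppoly (lam : List ℕ) (n : ℕ) (x : ℕ → ℚ) : ℚ :=
  ∑ᶠ T ∈ {T : ℕ × ℕ → Finset ℕ | IsSSVTP lam [] n T ∧
      ∀ c ∈ sCells lam [], (T c).card = 1},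
    ∏ k ∈ Finset.Icc 1 n, x k ^ tabWeight lam [] T k

/-- Schur Q-polynomial (no diagonal restriction). -/
noncomputable def Qpoly (lam : List ℕ) (n : ℕ) (x : ℕ → ℚ) : ℚ :=
  ∑ᶠ T ∈ {T : ℕ × ℕ → Finset ℕ | IsSSVTQ lam [] n T ∧
      ∀ c ∈ sCells lam [], (T c).card = 1},
    ∏ k ∈ Finset.Icc 1 n, x k ^ tabWeight lam [] T k

/-- Rows of `μ` containing a removable box: row `i` (1-indexed) is removable
iff decreasing `μ_i` by one again yields a strict partition. -/
def remRows (mu : List ℕ) : Finset ℕ :=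
  (Finset.Icc 1 mu.length).filter
    (fun i => mu.getD i 0 + 1 < mu.getD (i - 1) 0 ∨ mu.getD (i - 1) 0 = 1)

/-- Remove one box from each row in `B` (rows 1-indexed). -/
def removeRows (mu : List ℕ) (B : Finset ℕ) : List ℕ :=
  mu.mapIdx (fun i p => if i + 1 ∈ B then p - 1 else p)

/-- Strictly decreasing list of naturals, allowing trailing zeros. -/
def IsStrictPartitionZ (l : List ℕ) : Prop :=
  l.Chain' (fun a b => b < a ∨ b = 0)

/-- `μ ⊆ λ` componentwise (with `μ` padded by zeros). -/
def SubPartition (mu lam : List ℕ) : Prop :=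
  mu.length ≤ lam.length ∧ ∀ i, mu.getD i 0 ≤ lam.getD i 0

/-! ### Auxiliary development for the vanishing theorem -/

section SignedVanishing

open Finset

private lemma svv_le_foldr_max : ∀ {l : List ℕ} {a : ℕ}, a ∈ l → a ≤ l.foldr max 0
  | _ :: t, a, h => by
    rcases List.mem_cons.1 h with rfl | h
    · exact le_max_left _ _
    · exact le_trans (svv_le_foldr_max h) (le_max_right _ _)

private lemma svv_getD_le (l : List ℕ) (k : ℕ) : l.getD k 0 ≤ l.foldr max 0 := by
  by_cases hk : k < l.length
  · rw [List.getD_eq_getElem _ _ hk]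
    exact svv_le_foldr_max (List.getElem_mem hk)
  · rw [List.getD_eq_default _ _ (le_of_not_gt hk)]
    exact Nat.zero_le _

private lemma svv_mem_cells {lam : List ℕ} (c : ℕ × ℕ) :
    c ∈ sCells lam [] ↔ 1 ≤ c.1 ∧ c.1 ≤ lam.length ∧ c.1 ≤ c.2 ∧
      c.2 ≤ lam.getD (c.1 - 1) 0 + c.1 - 1 := by
  have hM := svv_getD_le lam (c.1 - 1)
  unfold sCells
  simp only [Finset.mem_filter, Finset.mem_product, Finset.mem_range, List.getD_nil, zero_add]
  omega


private lemma svv_mem_cells' {lam : List ℕ} (i j : ℕ) :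
    (i, j) ∈ sCells lam [] ↔ 1 ≤ i ∧ i ≤ lam.length ∧ i ≤ j ∧
      j ≤ lam.getD (i - 1) 0 + i - 1 :=
  svv_mem_cells (i, j)

private lemma svv_getD_lt {lam : List ℕ} (h : IsStrictPartition lam) {r : ℕ} (h1 : 1 ≤ r)
    (h2 : r < lam.length) : lam.getD r 0 < lam.getD (r - 1) 0 := by
  have hc := List.isChain_iff_getElem.1 h.1 (r - 1) (by omega)
  rw [List.getD_eq_getElem _ _ h2, List.getD_eq_getElem _ _ (by omega : r - 1 < lam.length)]
  have hr : r - 1 + 1 = r := by omega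
  simp only [hr] at hc
  exact hc

/-- Going up one step within a column stays in the diagram. -/
private lemma svv_cell_up {lam : List ℕ} (h : IsStrictPartition lam) {r j : ℕ} (hr : 1 ≤ r)
    (hc : (r + 1, j) ∈ sCells lam []) : (r, j) ∈ sCells lam [] := by
  rw [svv_mem_cells'] at hc ⊢
  simp only [Nat.add_sub_cancel] at hc
  have hlt : lam.getD r 0 < lam.getD (r - 1) 0 := svv_getD_lt h hr (by omega)
  exact ⟨hr, by omega, by omega, by omega⟩

private lemma svv_cell_left {lam : List ℕ} {i j : ℕ} (hij : i < j)
    (hc : (i, j) ∈ sCells lam []) : (i, j - 1) ∈ sCells lam [] := by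
  rw [svv_mem_cells'] at hc ⊢
  exact ⟨hc.1, hc.2.1, by omega, by omega⟩

/-- Entries strictly lower in a column dominate all entries of a higher cell. -/
private lemma svv_col_chain {lam : List ℕ} {n : ℕ} {T : ℕ × ℕ → Finset ℕ}
    (h : IsStrictPartition lam) (hQ : IsSSVTQ lam [] n T) {r j : ℕ}
    (hr : (r, j) ∈ sCells lam []) :
    ∀ r', r < r' → (r', j) ∈ sCells lam [] → ∀ a ∈ T (r, j), ∀ b ∈ T (r', j), a ≤ b := by
  have hr1 : 1 ≤ r := ((svv_mem_cells' _ _).1 hr).1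
  intro r'
  induction r' with
  | zero => intro hlt; omega
  | succ m ih =>
    intro hlt hmem a ha b hb
    rcases Nat.lt_or_ge r m with hm | hm
    · have hmj : (m, j) ∈ sCells lam [] := svv_cell_up h (by omega) hmem
      obtain ⟨x, hx⟩ := hQ.cellNonempty _ hmj
      exact le_trans (ih hm hmj a ha x hx) (hQ.colWeak m j hmj hmem x hx b hb)
    · have hrm : r = m := by omega
      subst hrm
      exact hQ.colWeak r j hr hmem a ha b hb

/-- The set of non-minimal cells. -/
noncomputable def svvNonMin (lam : List ℕ) (T : ℕ × ℕ → Finset ℕ) : Finset (ℕ × ℕ) :=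
  (sCells lam []).filter (fun c => T c ≠ {2 * c.1})

noncomputable def svvCfst (lam : List ℕ) (T : ℕ × ℕ → Finset ℕ) : ℕ :=
  sInf {m | ∃ c ∈ svvNonMin lam T, c.1 = m}

noncomputable def svvCsnd (lam : List ℕ) (T : ℕ × ℕ → Finset ℕ) : ℕ :=
  sInf {m | ∃ c ∈ svvNonMin lam T, c.1 = svvCfst lam T ∧ c.2 = m}

/-- The first non-minimal cell in reading order. -/
noncomputable def svvCstar (lam : List ℕ) (T : ℕ × ℕ → Finset ℕ) : ℕ × ℕ :=
  (svvCfst lam T, svvCsnd lam T)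

/-- The toggling involution: add/remove the letter `2i` at the first
non-minimal cell. -/
noncomputable def svvToggle (lam : List ℕ) (T : ℕ × ℕ → Finset ℕ) : ℕ × ℕ → Finset ℕ :=
  Function.update T (svvCstar lam T)
    (if 2 * (svvCstar lam T).1 ∈ T (svvCstar lam T)
     then (T (svvCstar lam T)).erase (2 * (svvCstar lam T).1)
     else insert (2 * (svvCstar lam T).1) (T (svvCstar lam T)))

private lemma svv_nonMin_nonempty {lam : List ℕ} {n : ℕ} {T : ℕ × ℕ → Finset ℕ}
    (hT : IsSSVTP lam [] n T) (hne : T ≠ TminP lam) : (svvNonMin lam T).Nonempty := by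
  rw [Finset.nonempty_iff_ne_empty]
  intro hemp
  apply hne
  funext c
  by_cases hc : c ∈ sCells lam []
  · have hcm : c ∉ svvNonMin lam T := by rw [hemp]; exact Finset.notMem_empty c
    rw [svvNonMin, Finset.mem_filter] at hcm
    push_neg at hcm
    rw [hcm hc, TminP, if_pos hc]
  · rw [hT.1.support c hc, TminP, if_neg hc]

private lemma svv_cstar_mem {lam : List ℕ} {T : ℕ × ℕ → Finset ℕ}
    (hne : (svvNonMin lam T).Nonempty) : svvCstar lam T ∈ svvNonMin lam T := by
  obtain ⟨c, hc⟩ := hne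
  have h1 : svvCfst lam T ∈ {m | ∃ c ∈ svvNonMin lam T, c.1 = m} :=
    Nat.sInf_mem ⟨c.1, c, hc, rfl⟩
  obtain ⟨c1, hc1, hc1'⟩ := h1
  have h2 : svvCsnd lam T ∈ {m | ∃ c ∈ svvNonMin lam T, c.1 = svvCfst lam T ∧ c.2 = m} :=
    Nat.sInf_mem ⟨c1.2, c1, hc1, hc1', rfl⟩
  obtain ⟨c2, hc2, hc2a, hc2b⟩ := h2
  have : svvCstar lam T = c2 := by
    rw [svvCstar, ← hc2a, ← hc2b]
  rw [this]
  exact hc2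

/-- Cells strictly before the first non-minimal cell (in reading order) are
minimal. -/
private lemma svv_prefix_min {lam : List ℕ} {T : ℕ × ℕ → Finset ℕ} :
    ∀ x ∈ sCells lam [],
      (x.1 < (svvCstar lam T).1 ∨ (x.1 = (svvCstar lam T).1 ∧ x.2 < (svvCstar lam T).2)) →
      T x = {2 * x.1} := by
  intro x hxD hlt
  by_contra hxne
  have hx : x ∈ svvNonMin lam T := Finset.mem_filter.2 ⟨hxD, hxne⟩
  have h1 : svvCfst lam T ≤ x.1 := Nat.sInf_le ⟨x, hx, rfl⟩
  have he1 : (svvCstar lam T).1 = svvCfst lam T := rfl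
  rcases hlt with hl | ⟨hl, hl2⟩
  · omega
  · have h2 : svvCsnd lam T ≤ x.2 := Nat.sInf_le ⟨x, hx, by rw [← he1, hl], rfl⟩
    have he2 : (svvCstar lam T).2 = svvCsnd lam T := rfl
    omega

/-- All entries of the first non-minimal cell `(ci, cj)` are at least `2 ci`. -/
private lemma svv_min_bound {lam : List ℕ} {n : ℕ} {T : ℕ × ℕ → Finset ℕ}
    (h : IsStrictPartition lam) (hT : IsSSVTP lam [] n T) {ci cj : ℕ}
    (hcD : (ci, cj) ∈ sCells lam [])
    (hpre : ∀ x ∈ sCells lam [], (x.1 < ci ∨ (x.1 = ci ∧ x.2 < cj)) → T x = {2 * x.1}) :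
    ∀ a ∈ T (ci, cj), 2 * ci ≤ a := by
  intro a ha
  obtain ⟨hci1, hcil, hcile, hcir⟩ := (svv_mem_cells' ci cj).1 hcD
  rcases Nat.lt_or_ge ci cj with hij | hij
  · -- there is a cell to the left, and it is minimal
    have hl : (ci, cj - 1) ∈ sCells lam [] := svv_cell_left hij hcD
    have hlm : T (ci, cj - 1) = {2 * ci} := hpre _ hl (Or.inr ⟨rfl, by omega⟩)
    have hsj : cj - 1 + 1 = cj := by omega
    exact hT.1.rowWeak ci (cj - 1) hl (by rw [hsj]; exact hcD) (2 * ci)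
      (by rw [hlm]; exact Finset.mem_singleton_self _) a (by rw [hsj]; exact ha)
  · -- diagonal cell
    have hij' : ci = cj := le_antisymm hcile hij
    subst hij'
    have heven : a % 2 = 0 := hT.2 ci a ha
    rcases Nat.lt_or_ge ci 2 with hc1 | hc2
    · have := (hT.1.inRange _ a ha).1
      omega
    · have hsub : ci - 1 + 1 = ci := by omega
      have hup : (ci - 1, ci) ∈ sCells lam [] :=
        svv_cell_up h (by omega) (by rw [hsub]; exact hcD)
      have hupm : T (ci - 1, ci) = {2 * (ci - 1)} := hpre _ hup (Or.inl (by omega))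
      have hcw := hT.1.colWeak (ci - 1) ci hup (by rw [hsub]; exact hcD) (2 * (ci - 1))
        (by rw [hupm]; exact Finset.mem_singleton_self _) a (by rw [hsub]; exact ha)
      by_cases hA : a = 2 * (ci - 1)
      · exfalso
        have := hT.1.colOnce a heven (ci - 1) ci ci
          (by rw [hupm, hA]; exact Finset.mem_singleton_self _) ha
        omega
      · omega

/-- Shrinking cells (keeping them nonempty) preserves validity. -/
private lemma svv_mono {lam : List ℕ} {n : ℕ} {T T' : ℕ × ℕ → Finset ℕ}
    (hT : IsSSVTP lam [] n T) (hsub : ∀ c, T' c ⊆ T c)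
    (hne : ∀ c ∈ sCells lam [], (T' c).Nonempty) : IsSSVTP lam [] n T' := by
  refine ⟨⟨?_, hne, ?_, ?_, ?_, ?_, ?_⟩, ?_⟩
  · intro c hc
    have hs := hT.1.support c hc
    exact Finset.subset_empty.1 (hs ▸ hsub c)
  · intro c a ha
    exact hT.1.inRange c a (hsub c ha)
  · intro i j h1 h2 a ha b hb
    exact hT.1.rowWeak i j h1 h2 a (hsub _ ha) b (hsub _ hb)
  · intro i j h1 h2 a ha b hb
    exact hT.1.colWeak i j h1 h2 a (hsub _ ha) b (hsub _ hb)
  · intro a ha i i' j h1 h2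
    exact hT.1.colOnce a ha i i' j (hsub _ h1) (hsub _ h2)
  · intro a ha i j j' h1 h2
    exact hT.1.rowOnce a ha i j j' (hsub _ h1) (hsub _ h2)
  · intro i a ha
    exact hT.2 i a (hsub _ ha)

/-- Inserting the letter `2 ci` into the first non-minimal cell preserves
validity. -/
private lemma svv_insert_valid {lam : List ℕ} {n : ℕ} {T : ℕ × ℕ → Finset ℕ}
    (h : IsStrictPartition lam) (hn : lam.length ≤ n)
    (hT : IsSSVTP lam [] n T) {ci cj : ℕ}
    (hcD : (ci, cj) ∈ sCells lam [])
    (hpre : ∀ x ∈ sCells lam [], (x.1 < ci ∨ (x.1 = ci ∧ x.2 < cj)) → T x = {2 * x.1})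
    {b0 : ℕ} (hb0m : b0 ∈ T (ci, cj)) (hb0ge : 2 * ci + 1 ≤ b0) :
    IsSSVTP lam [] n (Function.update T (ci, cj) (insert (2 * ci) (T (ci, cj)))) := by
  classical
  obtain ⟨hci1, hcil, hcile, _⟩ := (svv_mem_cells' ci cj).1 hcD
  set T' := Function.update T (ci, cj) (insert (2 * ci) (T (ci, cj))) with hT'def
  have hT'app : ∀ x, T' x = if x = (ci, cj) then insert (2 * ci) (T (ci, cj)) else T x :=
    fun x => Function.update_apply T (ci, cj) _ x
  have hmem : ∀ x a, a ∈ T' x → a ∈ T x ∨ (x = (ci, cj) ∧ a = 2 * ci) := by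
    intro x a ha
    by_cases hx : x = (ci, cj)
    · subst hx
      rw [hT'app, if_pos rfl] at ha
      rcases Finset.mem_insert.1 ha with hh | hh
      · exact Or.inr ⟨rfl, hh⟩
      · exact Or.inl hh
    · rw [hT'app, if_neg hx] at ha
      exact Or.inl ha
  -- the key claim: the letter `2 ci` can only sit in row `ci` of column `cj`
  have hclaim : ∀ r, 2 * ci ∈ T (r, cj) → r = ci := by
    intro r hrm
    by_cases hD : (r, cj) ∈ sCells lam []
    · rcases lt_trichotomy r ci with hlt | heq | hgt
      · have := hpre (r, cj) hD (Or.inl hlt)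
        rw [this, Finset.mem_singleton] at hrm
        omega
      · exact heq
      · exfalso
        have := svv_col_chain h hT.1 hcD r hgt hD b0 hb0m (2 * ci) hrm
        omega
    · rw [hT.1.support _ hD] at hrm
      exact absurd hrm (Finset.notMem_empty _)
  refine ⟨⟨?_, ?_, ?_, ?_, ?_, ?_, ?_⟩, ?_⟩
  · -- support
    intro c hc
    rw [hT'app, if_neg (fun he => hc (by rw [he]; exact hcD))]
    exact hT.1.support c hc
  · -- nonempty
    intro c hc
    rw [hT'app]
    split_ifs with hx
    · exact Finset.insert_nonempty _ _
    · exact hT.1.cellNonempty c hc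
  · -- range
    intro c a ha
    rcases hmem c a ha with hh | ⟨_, rfl⟩
    · exact hT.1.inRange c a hh
    · constructor <;> omega
  · -- rows weakly increase
    intro r s h1 h2 a ha b hb
    rcases hmem _ _ ha with haT | ⟨hx1, ha2⟩
    · rcases hmem _ _ hb with hbT | ⟨hx2, hb2⟩
      · exact hT.1.rowWeak r s h1 h2 a haT b hbT
      · -- b = 2 ci is new, at (r, s+1) = (ci, cj); the cell left of it is minimal
        injection hx2 with e1 e2
        subst e1
        have hls : T (r, s) = {2 * r} := hpre (r, s) h1 (Or.inr ⟨rfl, by omega⟩)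
        rw [hls, Finset.mem_singleton] at haT
        omega
    · -- a = 2 ci is new, at (r, s) = (ci, cj)
      injection hx1 with e1 e2
      subst e1; subst e2
      rcases hmem _ _ hb with hbT | ⟨hx2, hb2⟩
      · have := hT.1.rowWeak r s h1 h2 b0 hb0m b hbT
        omega
      · injection hx2 with e1 e2
        omega
  · -- columns weakly increase
    intro r s h1 h2 a ha b hb
    rcases hmem _ _ ha with haT | ⟨hx1, ha2⟩
    · rcases hmem _ _ hb with hbT | ⟨hx2, hb2⟩
      · exact hT.1.colWeak r s h1 h2 a haT b hbT
      · -- b = 2 ci is new, at (r+1, s) = (ci, cj); the cell above is minimal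
        injection hx2 with e1 e2
        subst e2
        have hls : T (r, s) = {2 * r} := hpre (r, s) h1 (Or.inl (by omega))
        rw [hls, Finset.mem_singleton] at haT
        omega
    · injection hx1 with e1 e2
      subst e1; subst e2
      rcases hmem _ _ hb with hbT | ⟨hx2, hb2⟩
      · have := hT.1.colWeak r s h1 h2 b0 hb0m b hbT
        omega
      · injection hx2 with e1 e2
        omega
  · -- unprimed letters at most once per column
    intro a ha r r' s hm1 hm2
    rcases hmem _ _ hm1 with h1T | ⟨hx1, ha1⟩
    · rcases hmem _ _ hm2 with h2T | ⟨hx2, ha2⟩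
      · exact hT.1.colOnce a ha r r' s h1T h2T
      · injection hx2 with e1 e2
        subst e2
        rw [ha2] at h1T
        rw [hclaim r h1T, e1]
    · injection hx1 with e1 e2
      subst e2
      rcases hmem _ _ hm2 with h2T | ⟨hx2, ha2⟩
      · rw [ha1] at h2T
        rw [hclaim r' h2T, e1]
      · injection hx2 with e1' e2'
        rw [e1, e1']
  · -- primed letters at most once per row
    intro a ha r s s' hm1 hm2
    rcases hmem _ _ hm1 with h1T | ⟨hx1, ha1⟩
    · rcases hmem _ _ hm2 with h2T | ⟨hx2, ha2⟩
      · exact hT.1.rowOnce a ha r s s' h1T h2T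
      · omega
    · omega
  · -- unprimed letters on the diagonal
    intro r a ha
    rcases hmem _ _ ha with hh | ⟨_, rfl⟩
    · exact hT.2 r a hh
    · omega

/-- All the properties of the toggling involution needed for the signed sum. -/
private lemma svv_toggle_facts {lam : List ℕ} {n : ℕ} {T : ℕ × ℕ → Finset ℕ}
    (h : IsStrictPartition lam) (hn : lam.length ≤ n)
    (hT : IsSSVTP lam [] n T) (hne : T ≠ TminP lam) :
    IsSSVTP lam [] n (svvToggle lam T) ∧ svvToggle lam T ≠ TminP lam ∧
      svvToggle lam T ≠ T ∧
      (tabSize lam [] (svvToggle lam T) = tabSize lam [] T + 1 ∨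
        tabSize lam [] T = tabSize lam [] (svvToggle lam T) + 1) ∧
      svvToggle lam (svvToggle lam T) = T := by
  classical
  have hnm : (svvNonMin lam T).Nonempty := svv_nonMin_nonempty hT hne
  have hcmem : svvCstar lam T ∈ svvNonMin lam T := svv_cstar_mem hnm
  rcases hc : svvCstar lam T with ⟨ci, cj⟩
  rw [hc] at hcmem
  have hcD : (ci, cj) ∈ sCells lam [] := (Finset.mem_filter.1 hcmem).1
  have hcne : T (ci, cj) ≠ {2 * ci} := by
    have := (Finset.mem_filter.1 hcmem).2
    exact this
  obtain ⟨hci1, hcil, hcile, _⟩ := (svv_mem_cells' ci cj).1 hcD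
  have hAne : (T (ci, cj)).Nonempty := hT.1.cellNonempty _ hcD
  have hpre : ∀ x ∈ sCells lam [], (x.1 < ci ∨ (x.1 = ci ∧ x.2 < cj)) → T x = {2 * x.1} := by
    intro x hx hlt
    apply svv_prefix_min x hx
    rw [hc]
    exact hlt
  have hmin : ∀ a ∈ T (ci, cj), 2 * ci ≤ a := svv_min_bound h hT hcD hpre
  have hb0 : ∃ b ∈ T (ci, cj), 2 * ci + 1 ≤ b := by
    by_contra hb
    push_neg at hb
    apply hcne
    obtain ⟨a, haA⟩ := hAne
    have ha2 : a = 2 * ci := by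
      have := hmin a haA
      have := hb a haA
      omega
    apply Finset.eq_singleton_iff_unique_mem.2
    refine ⟨ha2 ▸ haA, fun x hx => ?_⟩
    have := hmin x hx
    have := hb x hx
    omega
  obtain ⟨b0, hb0m, hb0ge⟩ := hb0
  -- abbreviate the new cell content
  set A' : Finset ℕ := if 2 * ci ∈ T (ci, cj) then (T (ci, cj)).erase (2 * ci)
    else insert (2 * ci) (T (ci, cj)) with hA'def
  have htog : svvToggle lam T = Function.update T (ci, cj) A' := by
    unfold svvToggle
    rw [hc, hA'def]
  have hb0A' : b0 ∈ A' := by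
    rw [hA'def]
    split_ifs with hx
    · exact Finset.mem_erase.2 ⟨by omega, hb0m⟩
    · exact Finset.mem_insert_of_mem hb0m
  have htogc : svvToggle lam T (ci, cj) = A' := by
    rw [htog, Function.update_self]
  have htogx : ∀ x, x ≠ (ci, cj) → svvToggle lam T x = T x := by
    intro x hx
    rw [htog, Function.update_of_ne hx]
  have hA'ne : A' ≠ {2 * ci} := by
    intro hEq
    rw [hEq, Finset.mem_singleton] at hb0A'
    omega
  -- validity
  have hvalid : IsSSVTP lam [] n (svvToggle lam T) := by
    rw [htog, hA'def]
    split_ifs with hx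
    · -- erase case
      apply svv_mono hT
      · intro c
        rw [Function.update_apply]
        split_ifs with he
        · rw [he]
          exact Finset.erase_subset _ _
        · exact Finset.Subset.refl _
      · intro c hcc
        rw [Function.update_apply]
        split_ifs with he
        · exact ⟨b0, Finset.mem_erase.2 ⟨by omega, hb0m⟩⟩
        · exact hT.1.cellNonempty c hcc
    · exact svv_insert_valid h hn hT hcD hpre hb0m hb0ge
  -- non-minimality
  have hnonmin : svvToggle lam T ≠ TminP lam := by
    intro hEq
    apply hA'ne
    rw [← htogc, hEq]
    simp only [TminP, if_pos hcD]
  -- the non-minimal cells are unchanged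
  have hnmEq : svvNonMin lam (svvToggle lam T) = svvNonMin lam T := by
    unfold svvNonMin
    apply Finset.filter_congr
    intro x hx
    by_cases he : x = (ci, cj)
    · subst he
      simp only [htogc]
      exact iff_of_true hA'ne hcne
    · rw [htogx x he]
  have hcstarEq : svvCstar lam (svvToggle lam T) = (ci, cj) := by
    have h1 : svvCfst lam (svvToggle lam T) = svvCfst lam T := by
      unfold svvCfst
      rw [hnmEq]
    have h2 : svvCsnd lam (svvToggle lam T) = svvCsnd lam T := by
      unfold svvCsnd
      rw [hnmEq, h1]
    have h3 : svvCstar lam (svvToggle lam T)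
        = (svvCfst lam (svvToggle lam T), svvCsnd lam (svvToggle lam T)) := rfl
    rw [h3, h1, h2]
    exact hc
  -- involutivity
  have hinv : svvToggle lam (svvToggle lam T) = T := by
    have hkey : (if 2 * ci ∈ svvToggle lam T (ci, cj)
        then (svvToggle lam T (ci, cj)).erase (2 * ci)
        else insert (2 * ci) (svvToggle lam T (ci, cj))) = T (ci, cj) := by
      rw [htogc, hA'def]
      by_cases hx : 2 * ci ∈ T (ci, cj)
      · rw [if_pos hx, if_neg (Finset.notMem_erase _ _), Finset.insert_erase hx]
      · rw [if_neg hx, if_pos (Finset.mem_insert_self _ _), Finset.erase_insert hx]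
    have hdef : svvToggle lam (svvToggle lam T) =
        Function.update (svvToggle lam T) (svvCstar lam (svvToggle lam T))
          (if 2 * (svvCstar lam (svvToggle lam T)).1
              ∈ svvToggle lam T (svvCstar lam (svvToggle lam T))
           then (svvToggle lam T (svvCstar lam (svvToggle lam T))).erase
              (2 * (svvCstar lam (svvToggle lam T)).1)
           else insert (2 * (svvCstar lam (svvToggle lam T)).1)
              (svvToggle lam T (svvCstar lam (svvToggle lam T)))) := rfl
    rw [hdef]
    simp only [hcstarEq]
    rw [hkey, htog, Function.update_idem, Function.update_eq_self]
  -- size change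
  have hsplit : ∀ f : ℕ × ℕ → Finset ℕ, (∑ c ∈ sCells lam [], (f c).card)
      = (∑ c ∈ sCells lam [] \ {(ci, cj)}, (f c).card) + (f (ci, cj)).card := fun f =>
    Finset.sum_eq_sum_sdiff_singleton_add hcD _
  have hsame : ∑ c ∈ sCells lam [] \ {(ci, cj)}, (svvToggle lam T c).card
      = ∑ c ∈ sCells lam [] \ {(ci, cj)}, (T c).card := by
    apply Finset.sum_congr rfl
    intro x hx
    exact congrArg Finset.card (htogx x (fun he => (Finset.mem_sdiff.1 hx).2 (Finset.mem_singleton.2 he)))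
  have hsize : tabSize lam [] (svvToggle lam T) = tabSize lam [] T + 1 ∨
      tabSize lam [] T = tabSize lam [] (svvToggle lam T) + 1 := by
    have hs1 : tabSize lam [] (svvToggle lam T)
        = (∑ c ∈ sCells lam [] \ {(ci, cj)}, (T c).card) + A'.card := by
      rw [tabSize, hsplit, hsame, htogc]
    have hs2 : tabSize lam [] T
        = (∑ c ∈ sCells lam [] \ {(ci, cj)}, (T c).card) + (T (ci, cj)).card := by
      rw [tabSize, hsplit]
    rw [hA'def] at hs1
    split_ifs at hs1 with hx
    · right
      have := Finset.card_erase_add_one hx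
      omega
    · left
      have := Finset.card_insert_of_notMem hx
      omega
  -- toggle changes the tableau
  have hneT : svvToggle lam T ≠ T := by
    intro hEq
    have hcc := congrFun hEq (ci, cj)
    rw [htogc, hA'def] at hcc
    split_ifs at hcc with hx
    · exact (Finset.notMem_erase (2 * ci) (T (ci, cj))) (by rw [hcc]; exact hx)
    · exact hx (by rw [← hcc]; exact Finset.mem_insert_self _ _)
  exact ⟨hvalid, hnonmin, hneT, hsize, hinv⟩

end SignedVanishing

/-- the signed count of non-minimal shifted set-valued P-tableaux
vanishes: `Σ_{T ≠ T_P} (-1)^{|T|} = 0`. -/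
theorem signed_sum_nonminimal_vanishes (lam : List ℕ) (n : ℕ)
    (h : IsStrictPartition lam) (hn : lam.length ≤ n) :
    ∑ᶠ T ∈ {T : ℕ × ℕ → Finset ℕ | IsSSVTP lam [] n T ∧ T ≠ TminP lam},
      ((-1 : ℤ) ^ tabSize lam [] T) = 0 := by
  classical
  set S : Set (ℕ × ℕ → Finset ℕ) := {T | IsSSVTP lam [] n T ∧ T ≠ TminP lam} with hS
  have hfin : S.Finite := by
    have hsub : S ⊆ (fun g : {c // c ∈ sCells lam []} → Finset ℕ =>
        (fun c => if hc : c ∈ sCells lam [] then g ⟨c, hc⟩ else ∅)) ''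
        (Set.univ.pi fun _ => {A : Finset ℕ | A ⊆ Finset.range (2 * n + 1)}) := by
      rintro T ⟨hT, -⟩
      refine ⟨fun x => T x.1, ?_, ?_⟩
      · intro x _
        intro a ha
        rw [Finset.mem_range]
        have := (hT.1.inRange _ a ha).2
        omega
      · funext c
        by_cases hc : c ∈ sCells lam []
        · simp only [dif_pos hc]
        · simp only [dif_neg hc]
          exact (hT.1.support c hc).symm
    exact Set.Finite.subset (Set.Finite.image _ (Set.Finite.pi fun _ =>
      Set.Finite.ofFinset (Finset.range (2 * n + 1)).powerset
        (fun A => by simp [Finset.mem_powerset, Set.mem_setOf_eq]))) hsub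
  rw [← hfin.coe_toFinset, finsum_mem_coe_finset]
  refine Finset.sum_involution (fun T _ => svvToggle lam T) ?_ ?_ ?_ ?_
  · intro T hTm
    obtain ⟨hT, hneq⟩ : T ∈ S := (Set.Finite.mem_toFinset hfin).1 hTm
    obtain ⟨-, -, -, hsize, -⟩ := svv_toggle_facts h hn hT hneq
    rcases hsize with h1 | h1
    · rw [h1, pow_succ]
      ring
    · rw [h1, pow_succ]
      ring
  · intro T hTm _
    obtain ⟨hT, hneq⟩ : T ∈ S := (Set.Finite.mem_toFinset hfin).1 hTm
    exact (svv_toggle_facts h hn hT hneq).2.2.1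
  · intro T hTm
    obtain ⟨hT, hneq⟩ : T ∈ S := (Set.Finite.mem_toFinset hfin).1 hTm
    obtain ⟨hv, hnm, -, -, -⟩ := svv_toggle_facts h hn hT hneq
    exact (Set.Finite.mem_toFinset hfin).2 ⟨hv, hnm⟩
  · intro T hTm
    obtain ⟨hT, hneq⟩ : T ∈ S := (Set.Finite.mem_toFinset hfin).1 hTm
    exact (svv_toggle_facts h hn hT hneq).2.2.2.2
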